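/- arXiv:1811.05307 — 2 statements merged into one kernel-verified Lean document; each statement's English description precedes it below -/
import Mathlib

section
/- For every subset A of the natural numbers, the real number r = Σ_{i=0}^∞ 3^{-i} χ_A(i) encodes A exactly: for each n ∈ ℕ, n ∈ A if and only if 3^n · r − 3 · ⌊3^{n-1} · r⌋ ≥ 1, equivalently the n-th digit of r in base 3 (of the fractional expansion obtained by repeatedly multiplying by 3 and taking floors) equals 1. -/
/-!
Write `r = ∑ χ_A(i) / 3^i`. Multiplying by `3^n` shifts the expansion: `3^n r = 3M + t` with
`M` an integer (the digits before position `n`) and `t = ∑ χ_A(n + k) / 3^k`. Since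
`0 ≤ t ≤ 3/2 < 3`, the remainder of `3^n r` modulo `3` is `t`, and `t = χ_A(n) + (tail) / 3`
with the tail at most `3/2`, so `1 ≤ t` exactly when `n ∈ A`.
-/

open Set

noncomputable def indicatorSeries (b : ℝ) (A : Set ℕ) : ℝ :=
  ∑' i, A.indicator 1 i / b ^ i

section

variable {b : ℝ} (A : Set ℕ)

lemma indicator_div_pow_le (hb : 0 < b) (i : ℕ) : A.indicator 1 i / b ^ i ≤ (1 / b) ^ i := by
  rw [one_div_pow]
  gcongr
  exact indicator_apply_le' (fun _ => le_rfl) (fun _ => zero_le_one)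

lemma summable_indicator_div_pow (hb : 1 < b) : Summable fun i => A.indicator 1 i / b ^ i :=
  .of_nonneg_of_le
    (fun i => div_nonneg (indicator_nonneg (fun _ _ => zero_le_one) i) (by positivity))
    (indicator_div_pow_le A (by linarith))
    (summable_geometric_of_lt_one (by positivity) ((div_lt_one (by linarith)).2 hb))

lemma indicatorSeries_nonneg (hb : 0 ≤ b) : 0 ≤ indicatorSeries b A :=
  tsum_nonneg fun i => div_nonneg (indicator_nonneg (fun _ _ => zero_le_one) i) (by positivity)

lemma indicatorSeries_le (hb : 1 < b) : indicatorSeries b A ≤ b / (b - 1) := by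
  have hr : 1 / b < 1 := (div_lt_one (by linarith)).2 hb
  calc indicatorSeries b A ≤ ∑' i, (1 / b) ^ i :=
        (summable_indicator_div_pow A hb).tsum_le_tsum (indicator_div_pow_le A (by linarith))
          (summable_geometric_of_lt_one (by positivity) hr)
    _ = b / (b - 1) := by
        rw [tsum_geometric_of_lt_one (by positivity) hr]
        field_simp

lemma indicatorSeries_eq_indicator_add (hb : 1 < b) :
    indicatorSeries b A = A.indicator 1 0 + indicatorSeries b ((· + 1) ⁻¹' A) / b := by
  rw [indicatorSeries, (summable_indicator_div_pow A hb).tsum_eq_zero_add, indicatorSeries,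
    ← tsum_div_const]
  congr 1
  · simp
  · congr 1 with i
    rw [pow_succ, div_mul_eq_div_div]
    rfl

lemma indicatorSeries_lt (hb : 2 < b) : indicatorSeries b A < b := by
  calc _ ≤ b / (b - 1) := indicatorSeries_le A (by linarith)
    _ < b := by rw [div_lt_iff₀ (by linarith)]; nlinarith

lemma one_le_indicatorSeries_iff (hb : 2 < b) : 1 ≤ indicatorSeries b A ↔ 0 ∈ A := by
  have hb0 : 0 < b := by linarith
  have htail0 := indicatorSeries_nonneg ((· + 1) ⁻¹' A) hb0.le
  have htail : indicatorSeries b ((· + 1) ⁻¹' A) / b < 1 :=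
    (div_lt_one hb0).2 (indicatorSeries_lt _ hb)
  rw [indicatorSeries_eq_indicator_add A (by linarith)]
  by_cases h0 : 0 ∈ A
  · simp only [h0, indicator_of_mem, Pi.one_apply, iff_true, le_add_iff_nonneg_right]
    exact div_nonneg htail0 hb0.le
  · simpa [h0] using htail

end

lemma exists_pow_mul_indicatorSeries {b : ℕ} (hb : 1 < b) (A : Set ℕ) (n : ℕ) :
    ∃ M : ℤ, (b : ℝ) ^ n * indicatorSeries b A = b * M + indicatorSeries b ((· + n) ⁻¹' A) := by
  have hb' : (1 : ℝ) < b := by exact_mod_cast hb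
  induction n with
  | zero => exact ⟨0, by simp⟩
  | succ n ih =>
    obtain ⟨M, hM⟩ := ih
    refine ⟨b * M + (A.indicator 1 n : ℤ), ?_⟩
    have hpre : (· + (n + 1)) ⁻¹' A = (· + 1) ⁻¹' ((· + n) ⁻¹' A) := by
      ext i; simp [add_assoc, add_comm 1 n]
    rw [pow_succ, mul_comm _ (b : ℝ), mul_assoc, hM,
      indicatorSeries_eq_indicator_add _ hb', hpre]
    have hdigit : ((· + n) ⁻¹' A).indicator (1 : ℕ → ℝ) 0 = ((A.indicator 1 n : ℤ) : ℝ) := by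
      by_cases hn : n ∈ A <;> simp [hn]
    rw [hdigit]
    field_simp
    push_cast
    ring

lemma sub_mul_floor_div_eq {b t : ℝ} (hb : 0 < b) (ht0 : 0 ≤ t) (htb : t < b) (M : ℤ) :
    b * M + t - b * ⌊(b * M + t) / b⌋ = t := by
  have : ⌊(b * M + t) / b⌋ = M := by
    rw [Int.floor_eq_iff, le_div_iff₀ hb, div_lt_iff₀ hb]
    constructor <;> linarith
  rw [this]; ring

open Classical in
theorem digit_extraction (A : Set ℕ)
    (r : ℝ) (hr : r = ∑' i : ℕ, (if i ∈ A then (1:ℝ) else 0) / 3 ^ i) :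
    ∀ n : ℕ, n ∈ A ↔ 1 ≤ 3 ^ n * r - 3 * ⌊3 ^ n * r / 3⌋ := by
  intro n
  have hr' : r = indicatorSeries 3 A := by
    simp only [hr, indicatorSeries, indicator_apply, Pi.one_apply]
  obtain ⟨M, hM⟩ := exists_pow_mul_indicatorSeries (b := 3) (by norm_num) A n
  push_cast at hM
  rw [hr', hM, sub_mul_floor_div_eq three_pos (indicatorSeries_nonneg _ zero_le_three)
    (indicatorSeries_lt _ (by norm_num)), one_le_indicatorSeries_iff _ (by norm_num)]
  simp
end

section
/- Schoenfield's limit lemma (computability version): a function f : ℕ → ℕ is computable relative to the halting problem 0′ if and only if there exists a (total) computable function F : ℕ × ℕ → ℕ such that for every x, f(x) = lim_{s→∞} F(s,x), i.e., F(s,x) = f(x) for all sufficiently large s. -/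
/-- Partial recursiveness relative to an oracle `O : ℕ → ℕ`: the usual
schemata of `Nat.Partrec` together with access to the oracle. -/
inductive RecursiveIn' (O : ℕ → ℕ) : (ℕ →. ℕ) → Prop
  | oracle : RecursiveIn' O O
  | zero : RecursiveIn' O (pure 0)
  | succ : RecursiveIn' O Nat.succ
  | left : RecursiveIn' O ↑fun n : ℕ => n.unpair.1
  | right : RecursiveIn' O ↑fun n : ℕ => n.unpair.2
  | pair {f g} : RecursiveIn' O f → RecursiveIn' O g →
      RecursiveIn' O fun n => Nat.pair <$> f n <*> g n
  | comp {f g} : RecursiveIn' O f → RecursiveIn' O g →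
      RecursiveIn' O fun n => g n >>= f
  | prec {f g} : RecursiveIn' O f → RecursiveIn' O g →
      RecursiveIn' O (Nat.unpaired fun a n =>
        n.rec (f a) fun y IH => do let i ← IH; g (Nat.pair a (Nat.pair y i)))
  | rfind {f} : RecursiveIn' O f →
      RecursiveIn' O fun a => Nat.rfind fun n => (fun m => m = 0) <$> f (Nat.pair a n)

/-- The halting problem `0′`: the set of `n` such that the `n`-th partial
recursive function halts on input `n`. -/
def HaltingProblem : Set ℕ :=
  {n : ℕ | ((Denumerable.ofNat Nat.Partrec.Code n).eval n).Dom}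

open Classical in
/-- The characteristic function of the halting problem. -/
noncomputable def chiK : ℕ → ℕ := fun n => if n ∈ HaltingProblem then 1 else 0

/-!
Forward direction: replace each oracle query `n ∈ 0′` by the stage-`s` guess "program `n` halts
on `n` within `s` steps" and run the computation on these guesses. A convergent computation uses
finitely many oracle answers, all of which are eventually correct, so the stage-`s` outputs are
eventually correct (induction over the schemata of `RecursiveIn'`).

Backward direction: "`F (·, x)` is constant from stage `n` on" is a `Π⁰₁` property of `(x, n)`,
hence decided by `0′`. Searching with `0′` for the least such `n` and returning `F (n, x)`
computes `f x`.
-/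

open Filter Nat.Partrec Nat.Partrec.Code

namespace RecursiveIn'

variable {O : ℕ → ℕ}

theorem of_eq {f g : ℕ →. ℕ} (hf : RecursiveIn' O f) (H : ∀ n, f n = g n) :
    RecursiveIn' O g :=
  funext H ▸ hf

theorem of_natPartrec {g : ℕ →. ℕ} (hg : Nat.Partrec g) : RecursiveIn' O g := by
  induction hg with
  | zero => exact .zero
  | succ => exact .succ
  | left => exact .left
  | right => exact .right
  | pair _ _ ihf ihg => exact .pair ihf ihg
  | comp _ _ ihf ihg => exact .comp ihf ihg
  | prec _ _ ihf ihg => exact .prec ihf ihg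
  | rfind _ ihf => exact .rfind ihf

theorem of_computable {g : ℕ → ℕ} (hg : Computable g) : RecursiveIn' O g :=
  of_natPartrec (Partrec.nat_iff.1 hg)

theorem comp_total {f g : ℕ → ℕ} (hf : RecursiveIn' O f) (hg : RecursiveIn' O g) :
    RecursiveIn' O fun n => f (g n) :=
  (hf.comp hg).of_eq fun n => Part.bind_some (g n) (f : ℕ →. ℕ)

theorem pair_total {f g : ℕ → ℕ} (hf : RecursiveIn' O f) (hg : RecursiveIn' O g) :
    RecursiveIn' O fun n => Nat.pair (f n) (g n) :=
  (hf.pair hg).of_eq fun n => by simp [PFun.coe_val, Seq.seq]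

theorem nat_find {g : ℕ → ℕ} (hg : RecursiveIn' O g) (H : ∀ a, ∃ n, g (Nat.pair a n) = 0) :
    RecursiveIn' O fun a => Nat.find (H a) := by
  refine hg.rfind.of_eq fun a => Part.eq_some_iff.2 (Nat.mem_rfind.2 ⟨?_, fun hm => ?_⟩)
  · simpa [PFun.coe_val] using Nat.find_spec (H a)
  · simpa [PFun.coe_val] using Nat.find_min (H a) hm

end RecursiveIn'

/-- `G s x` is the stage-`s` guess at `g x`. It has to be eventually correct on the domain of `g`
only; off the domain it is unconstrained. -/
def LimitPrimrec (g : ℕ →. ℕ) : Prop :=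
  ∃ G : ℕ → ℕ → Option ℕ, Primrec₂ G ∧ ∀ x, ∀ a ∈ g x, ∀ᶠ s in atTop, G s x = some a

namespace LimitPrimrec

theorem of_eventually_eq {g : ℕ → ℕ} {G : ℕ → ℕ → ℕ} (hG : Primrec₂ G)
    (hlim : ∀ x, ∀ᶠ s in atTop, G s x = g x) : LimitPrimrec g := by
  refine ⟨fun s x => some (G s x), Primrec.option_some.comp hG, fun x a ha => ?_⟩
  obtain rfl : a = g x := Part.mem_some_iff.1 ha
  filter_upwards [hlim x] with s hs
  rw [hs]

theorem of_primrec {g : ℕ → ℕ} (hg : Primrec g) : LimitPrimrec g :=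
  of_eventually_eq (G := fun _ x => g x) (hg.comp Primrec.snd) fun _ => .of_forall fun _ => rfl

variable {f g : ℕ →. ℕ}

theorem pair (hf : LimitPrimrec f) (hg : LimitPrimrec g) :
    LimitPrimrec fun n => Nat.pair <$> f n <*> g n := by
  obtain ⟨G₁, hG₁, h₁⟩ := hf
  obtain ⟨G₂, hG₂, h₂⟩ := hg
  refine ⟨fun s x => (G₁ s x).bind fun a => (G₂ s x).map (Nat.pair a), ?_, fun x v hv => ?_⟩
  · exact Primrec.option_bind hG₁ <| Primrec.option_map (hG₂.comp (Primrec.fst.comp Primrec.fst)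
      (Primrec.snd.comp Primrec.fst)) (Primrec₂.natPair.comp (Primrec.snd.comp Primrec.fst)
      Primrec.snd).to₂
  obtain ⟨_, hpa, hv⟩ := Part.mem_bind_iff.1 hv
  obtain ⟨a, ha, rfl⟩ := (Part.mem_map_iff _).1 hpa
  obtain ⟨b, hb, rfl⟩ := (Part.mem_map_iff _).1 hv
  filter_upwards [h₁ x a ha, h₂ x b hb] with s h1 h2
  simp [h1, h2]

theorem comp (hf : LimitPrimrec f) (hg : LimitPrimrec g) :
    LimitPrimrec fun n => g n >>= f := by
  obtain ⟨G₁, hG₁, h₁⟩ := hf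
  obtain ⟨G₂, hG₂, h₂⟩ := hg
  refine ⟨fun s x => (G₂ s x).bind (G₁ s), ?_, fun x v hv => ?_⟩
  · exact Primrec.option_bind hG₂ (hG₁.comp (Primrec.fst.comp Primrec.fst) Primrec.snd).to₂
  obtain ⟨a, ha, hv⟩ := Part.mem_bind_iff.1 hv
  filter_upwards [h₂ x a ha, h₁ a v hv] with s h2 h1
  simp [h2, h1]

theorem prec (hf : LimitPrimrec f) (hg : LimitPrimrec g) :
    LimitPrimrec (Nat.unpaired fun a n =>
      n.rec (f a) fun y IH => do let i ← IH; g (Nat.pair a (Nat.pair y i))) := by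
  obtain ⟨G₁, hG₁, h₁⟩ := hf
  obtain ⟨G₂, hG₂, h₂⟩ := hg
  refine ⟨fun s m => m.unpair.2.rec (G₁ s m.unpair.1)
    fun y IH => IH.bind fun i => G₂ s (Nat.pair m.unpair.1 (Nat.pair y i)), ?_, fun m v hv => ?_⟩
  · have hstep : Primrec₂ fun (p : ℕ × ℕ) (q : ℕ × Option ℕ) =>
        q.2.bind fun i => G₂ p.1 (Nat.pair p.2.unpair.1 (Nat.pair q.1 i)) :=
      (Primrec.option_bind (Primrec.snd.comp Primrec.snd) (hG₂.comp
        (Primrec.fst.comp (Primrec.fst.comp Primrec.fst))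
        (Primrec₂.natPair.comp
          (Primrec.fst.comp (Primrec.unpair.comp (Primrec.snd.comp (Primrec.fst.comp Primrec.fst))))
          (Primrec₂.natPair.comp (Primrec.fst.comp (Primrec.snd.comp Primrec.fst))
            Primrec.snd))).to₂).to₂
    exact Primrec.nat_rec' (Primrec.snd.comp (Primrec.unpair.comp Primrec.snd))
      (hG₁.comp Primrec.fst (Primrec.fst.comp (Primrec.unpair.comp Primrec.snd))) hstep
  obtain ⟨a, n, rfl⟩ : ∃ a n, m = Nat.pair a n := ⟨_, _, (Nat.pair_unpair m).symm⟩
  simp only [Nat.unpaired, Nat.unpair_pair] at hv ⊢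
  induction n generalizing v with
  | zero => exact h₁ a v hv
  | succ n ih =>
    obtain ⟨i, hi, hv⟩ := Part.mem_bind_iff.1 hv
    filter_upwards [ih i hi, h₂ _ v hv] with s hs hs'
    simp [hs, hs']

theorem rfind (hf : LimitPrimrec f) :
    LimitPrimrec fun a => Nat.rfind fun n => (fun m => m = 0) <$> f (Nat.pair a n) := by
  obtain ⟨G, hG, h⟩ := hf
  refine ⟨fun s x => some ((List.range (s + 1)).findIdx fun n =>
    decide (G s (Nat.pair x n) = some 0)), ?_, fun x a ha => ?_⟩
  · exact Primrec.option_some.comp <| Primrec.list_findIdx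
      (Primrec.list_range.comp (Primrec.succ.comp Primrec.fst))
      (Primrec.eq.comp (hG.comp (Primrec.fst.comp Primrec.fst)
        (Primrec₂.natPair.comp (Primrec.snd.comp Primrec.fst) Primrec.snd))
        (Primrec.const (some 0))).decide.to₂
  obtain ⟨hzero, hpos⟩ := Nat.mem_rfind.1 ha
  obtain ⟨k, hk, hk0⟩ := (Part.mem_map_iff _).1 hzero
  obtain rfl : k = 0 := of_decide_eq_true hk0
  have hbelow : ∀ᶠ s in atTop, ∀ m ∈ Set.Iio a, G s (Nat.pair x m) ≠ some 0 := by
    refine (Set.finite_Iio a).eventually_all.2 fun m hm => ?_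
    obtain ⟨k, hk, hk0⟩ := (Part.mem_map_iff _).1 (hpos hm)
    filter_upwards [h _ k hk] with s hs
    simpa [hs] using of_decide_eq_false hk0
  filter_upwards [h _ 0 hk, hbelow, eventually_ge_atTop a] with s hs hs_below hsa
  rw [Option.some_inj, List.findIdx_eq (by simpa using Nat.lt_succ_of_le hsa)]
  simpa [hs] using hs_below

end LimitPrimrec

theorem RecursiveIn'.limitPrimrec {O : ℕ → ℕ} (hO : LimitPrimrec O) {g : ℕ →. ℕ}
    (hg : RecursiveIn' O g) : LimitPrimrec g := by
  induction hg with
  | oracle => exact hO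
  | zero => exact .of_primrec (Primrec.const 0)
  | succ => exact .of_primrec Primrec.succ
  | left => exact .of_primrec (Primrec.fst.comp Primrec.unpair)
  | right => exact .of_primrec (Primrec.snd.comp Primrec.unpair)
  | pair _ _ ihf ihg => exact ihf.pair ihg
  | comp _ _ ihf ihg => exact ihf.comp ihg
  | prec _ _ ihf ihg => exact ihf.prec ihg
  | rfind _ ihf => exact ihf.rfind

theorem eventually_isSome_evaln_iff (c : Code) (n : ℕ) :
    ∀ᶠ s in atTop, (evaln s c n).isSome ↔ (c.eval n).Dom := by
  have hsound : ∀ s, (evaln s c n).isSome → (c.eval n).Dom := fun s hs =>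
    let ⟨y, hy⟩ := Option.isSome_iff_exists.1 hs
    Part.dom_iff_mem.2 ⟨y, evaln_sound hy⟩
  by_cases h : (c.eval n).Dom
  · obtain ⟨y, hy⟩ := Part.dom_iff_mem.1 h
    obtain ⟨k, hk⟩ := evaln_complete.1 hy
    filter_upwards [eventually_ge_atTop k] with s hs
    exact ⟨hsound s, fun _ => Option.isSome_iff_exists.2 ⟨y, evaln_mono hs hk⟩⟩
  · exact .of_forall fun s => ⟨hsound s, fun h' => (h h').elim⟩

theorem limitPrimrec_chiK : LimitPrimrec chiK := by
  refine .of_eventually_eq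
    (G := fun s n => bif (evaln s (Denumerable.ofNat Code n) n).isSome then 1 else 0) ?_ fun n => ?_
  · exact Primrec.cond (Primrec.option_isSome.comp (primrec_evaln.comp
      ((Primrec.fst.pair ((Primrec.ofNat Code).comp Primrec.snd)).pair Primrec.snd)))
      (Primrec.const 1) (Primrec.const 0)
  · filter_upwards [eventually_isSome_evaln_iff (Denumerable.ofNat Code n) n] with s hs
    simp [chiK, HaltingProblem, ← hs]

theorem exists_computable_reduction_to_haltingProblem {p : ℕ →. ℕ} (hp : Partrec p) :
    ∃ h : ℕ → ℕ, Computable h ∧ ∀ m, h m ∈ HaltingProblem ↔ (p m).Dom := by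
  obtain ⟨c, hc⟩ :=
    exists_code.1 (Partrec.nat_iff.1 (hp.comp (Computable.fst.comp Computable.unpair)))
  refine ⟨fun m => Encodable.encode (c.curry m),
    Computable.encode.comp (primrec₂_curry.comp (Primrec.const c) Primrec.id).to_comp, fun m => ?_⟩
  simp [HaltingProblem, eval_curry, hc]

theorem exists_recursiveIn_chiK_eq_zero_iff_forall {q : ℕ → ℕ → Bool} (hq : Computable₂ q) :
    ∃ g : ℕ → ℕ, RecursiveIn' chiK g ∧ ∀ m, g m = 0 ↔ ∀ t, q m t = false := by
  obtain ⟨h, hh, hK⟩ := exists_computable_reduction_to_haltingProblem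
    (Partrec.rfind (p := fun m => (q m : ℕ →. Bool)) hq.partrec₂)
  refine ⟨fun m => chiK (h m), RecursiveIn'.oracle.comp_total (.of_computable hh), fun m => ?_⟩
  simp [chiK, hK, Nat.rfind_dom, PFun.coe_val]

theorem recursiveIn_chiK_of_eventually_eq {F : ℕ × ℕ → ℕ} (hF : Computable F) {f : ℕ → ℕ}
    (hlim : ∀ x, ∀ᶠ s in atTop, F (s, x) = f x) : RecursiveIn' chiK fun n => f n := by
  -- `g (Nat.pair x n) = 0` iff `F (·, x)` is constant from stage `n` on
  obtain ⟨g, hg, hg0⟩ := exists_recursiveIn_chiK_eq_zero_iff_forall (q := fun m t =>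
    F (m.unpair.2 + t, m.unpair.1) != F (m.unpair.2, m.unpair.1)) <| by
      have hx : Computable fun p : ℕ × ℕ => p.1.unpair.1 :=
        Computable.fst.comp (Computable.unpair.comp Computable.fst)
      have hn : Computable fun p : ℕ × ℕ => p.1.unpair.2 :=
        Computable.snd.comp (Computable.unpair.comp Computable.fst)
      exact Primrec.not.to_comp.comp <| Primrec.beq.to_comp.comp
        (hF.comp ((Primrec.nat_add.to_comp.comp hn Computable.snd).pair hx)) (hF.comp (hn.pair hx))
  have hsettled : ∀ x, ∃ n, g (Nat.pair x n) = 0 := by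
    intro x
    obtain ⟨N, hN⟩ := eventually_atTop.1 (hlim x)
    refine ⟨N, (hg0 _).2 fun t => ?_⟩
    simp [hN (N + t) (by omega), hN N le_rfl]
  have hval : ∀ x, F (Nat.find (hsettled x), x) = f x := by
    intro x
    obtain ⟨N, hN⟩ := eventually_atTop.1 (hlim x)
    have hconst := (hg0 _).1 (Nat.find_spec (hsettled x)) N
    simp only [Nat.unpair_pair, bne_eq_false_iff_eq] at hconst
    rw [← hconst, hN _ (by omega)]
  have := (RecursiveIn'.of_computable (O := chiK) (hF.comp Computable.unpair)).comp_total
    ((hg.nat_find hsettled).pair_total (.of_computable Computable.id))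
  simpa [hval] using this

/-- Shoenfield's limit lemma: `f` is computable relative to `0′` iff it is the
pointwise (eventually constant) limit of a total computable function. -/
theorem shoenfield_limit_lemma (f : ℕ → ℕ) :
    RecursiveIn' chiK (fun n => f n) ↔
      ∃ F : ℕ × ℕ → ℕ, Computable F ∧
        ∀ x : ℕ, ∃ N : ℕ, ∀ s ≥ N, F (s, x) = f x := by
  constructor
  · intro hf
    obtain ⟨G, hG, hlim⟩ := hf.limitPrimrec limitPrimrec_chiK
    refine ⟨fun p => (G p.1 p.2).getD 0, (Primrec.option_getD.comp hG (Primrec.const 0)).to_comp,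
      fun x => ?_⟩
    obtain ⟨N, hN⟩ := eventually_atTop.1 (hlim x (f x) (Part.mem_some _))
    exact ⟨N, fun s hs => by simp [hN s hs]⟩
  · rintro ⟨F, hF, hlim⟩
    exact recursiveIn_chiK_of_eventually_eq hF fun x => eventually_atTop.2 (hlim x)
end
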